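/- arXiv:1806.01494 — 4 statements merged into one kernel-verified Lean document; each statement's English description precedes it below -/
import Mathlib

section
/- With S_xx = Σ_i x_i x_i' invertible and max_i P_ii < 1, let A be a symmetric k×k matrix, x̃_i = A S_xx⁻¹ x_i, B_ii = x_i' S_xx⁻¹ A S_xx⁻¹ x_i, β̂ the OLS estimator, β̂_{-i} the leave-i-out OLS estimator, and σ̂_i² = y_i (y_i - x_i'β̂_{-i}). Then the two representations of the leave-out estimator coincide: β̂'Aβ̂ − Σ_{i=1}^n B_ii σ̂_i² = Σ_{i=1}^n y_i x̃_i' β̂_{-i}. -/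
open Matrix BigOperators Finset

lemma mul_vecMulVec {k : ℕ} (M : Matrix (Fin k) (Fin k) ℝ) (a b : Fin k → ℝ) :
    M * vecMulVec a b = vecMulVec (M.mulVec a) b := by
  ext i j
  simp [Matrix.mul_apply, vecMulVec_apply, Matrix.mulVec, dotProduct,
    Finset.sum_mul, mul_assoc]

lemma vecMulVec_mul {k : ℕ} (M : Matrix (Fin k) (Fin k) ℝ) (a b : Fin k → ℝ) :
    vecMulVec a b * M = vecMulVec a (Matrix.vecMul b M) := by
  ext i j
  simp [Matrix.mul_apply, vecMulVec_apply, Matrix.vecMul, dotProduct,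
    Finset.mul_sum, mul_assoc]

lemma vecMulVec_mulVec {k : ℕ} (a b c : Fin k → ℝ) :
    (vecMulVec a b).mulVec c = (b ⬝ᵥ c) • a := by
  ext i
  simp only [Matrix.mulVec, vecMulVec_apply, dotProduct, Pi.smul_apply, smul_eq_mul,
    Finset.sum_mul]
  exact Finset.sum_congr rfl fun j _ => by ring

lemma vecMul_vecMulVec {k : ℕ} (b c d : Fin k → ℝ) :
    Matrix.vecMul b (vecMulVec c d) = (b ⬝ᵥ c) • d := by
  ext j
  simp only [Matrix.vecMul, dotProduct, vecMulVec_apply, Pi.smul_apply, smul_eq_mul,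
    Finset.sum_mul]
  exact Finset.sum_congr rfl fun l _ => by ring

lemma vecMulVec_smul_right {k : ℕ} (a b : Fin k → ℝ) (r : ℝ) :
    vecMulVec a (r • b) = r • vecMulVec a b := by
  ext i j
  simp [vecMulVec_apply, mul_comm, mul_assoc, mul_left_comm]

lemma sum_dotProduct' {n k : ℕ} (f : Fin n → Fin k → ℝ) (w : Fin k → ℝ) :
    (∑ i, f i) ⬝ᵥ w = ∑ i, f i ⬝ᵥ w := by
  simp only [dotProduct, Finset.sum_apply, Finset.sum_mul]
  exact Finset.sum_comm

/-- the two representations of the leave-out estimator coincide: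
`β̂'Aβ̂ − Σ_i B_ii σ̂_i² = Σ_i y_i x̃_i'β̂_{-i}`. -/
theorem leave_out_estimator_two_representations {n k : ℕ}
    (x : Fin n → Fin k → ℝ) (y : Fin n → ℝ)
    (A Sxx : Matrix (Fin k) (Fin k) ℝ)
    (hA : A.IsSymm)
    (hSxx : Sxx = ∑ i, vecMulVec (x i) (x i))
    (hS : IsUnit Sxx.det)
    (hP : ∀ i, x i ⬝ᵥ Sxx⁻¹.mulVec (x i) < 1)
    (βhat : Fin k → ℝ)
    (hβ : βhat = Sxx⁻¹.mulVec (∑ j, y j • x j))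
    (βhati : Fin n → Fin k → ℝ)
    (hβi : ∀ i, βhati i = (Sxx - vecMulVec (x i) (x i))⁻¹.mulVec
      (∑ j ∈ Finset.univ.erase i, y j • x j))
    (B : Fin n → ℝ)
    (hB : ∀ i, B i = x i ⬝ᵥ (Sxx⁻¹ * A * Sxx⁻¹).mulVec (x i))
    (σhatsq : Fin n → ℝ)
    (hσ : ∀ i, σhatsq i = y i * (y i - x i ⬝ᵥ βhati i))
    (xtil : Fin n → Fin k → ℝ)
    (hxtil : ∀ i, xtil i = A.mulVec (Sxx⁻¹.mulVec (x i))) :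
    βhat ⬝ᵥ A.mulVec βhat - ∑ i, B i * σhatsq i
      = ∑ i, y i * (xtil i ⬝ᵥ βhati i) := by
  have hSsymm : Sxxᵀ = Sxx := by
    rw [hSxx]
    ext a b
    simp [Matrix.transpose_apply, Matrix.sum_apply, vecMulVec_apply, mul_comm]
  have h2 : Sxx * Sxx⁻¹ = 1 := Matrix.mul_nonsing_inv _ hS
  have hIsymm : Sxx⁻¹ᵀ = Sxx⁻¹ := by
    rw [Matrix.transpose_nonsing_inv, hSsymm]
  have hvm : ∀ v : Fin k → ℝ, Matrix.vecMul v Sxx⁻¹ = Sxx⁻¹.mulVec v := by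
    intro v
    rw [← hIsymm, Matrix.vecMul_transpose, hIsymm]
  -- per-index key identity
  have key : ∀ i, y i * (xtil i ⬝ᵥ βhati i)
      = y i * (xtil i ⬝ᵥ βhat) - B i * σhatsq i := by
    intro i
    set u : Fin k → ℝ := Sxx⁻¹.mulVec (x i) with hu
    set P : ℝ := x i ⬝ᵥ u with hPdef
    have hne : (1 : ℝ) - P ≠ 0 := (sub_pos.mpr (hP i)).ne'
    set M : Matrix (Fin k) (Fin k) ℝ := Sxx⁻¹ + (1 - P)⁻¹ • vecMulVec u u with hM
    have hxu : Sxx.mulVec u = x i := by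
      rw [hu, Matrix.mulVec_mulVec, h2, Matrix.one_mulVec]
    have e1 : Sxx * M = 1 + (1 - P)⁻¹ • vecMulVec (x i) u := by
      rw [hM, Matrix.mul_add, h2, Matrix.mul_smul, mul_vecMulVec, hxu]
    have e2 : vecMulVec (x i) (x i) * M
        = vecMulVec (x i) u + ((1 - P)⁻¹ * P) • vecMulVec (x i) u := by
      rw [hM, Matrix.mul_add, vecMulVec_mul, hvm, Matrix.mul_smul, vecMulVec_mul,
        vecMul_vecMulVec, ← hPdef, vecMulVec_smul_right, smul_smul]
    have hNM : (Sxx - vecMulVec (x i) (x i)) * M = 1 := by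
      rw [sub_mul, e1, e2]
      have hc : (1 - P)⁻¹ * (1 - P) = 1 := inv_mul_cancel₀ hne
      ext a b
      simp only [Matrix.sub_apply, Matrix.add_apply, Matrix.smul_apply, vecMulVec_apply,
        smul_eq_mul]
      linear_combination (x i a * u b) * hc
    have hMeq : (Sxx - vecMulVec (x i) (x i))⁻¹ = M := Matrix.inv_eq_right_inv hNM
    have hc : ∑ j ∈ Finset.univ.erase i, y j • x j
        = (∑ j, y j • x j) - y i • x i := by
      rw [Finset.sum_erase_eq_sub (Finset.mem_univ i)]
    have hlin : Sxx⁻¹.mulVec ((∑ j, y j • x j) - y i • x i) = βhat - y i • u := by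
      rw [Matrix.mulVec_sub, ← hβ, hu, Matrix.mulVec_smul]
    have hβival : βhati i
        = (βhat - y i • u) + ((1 - P)⁻¹ * (u ⬝ᵥ ((∑ j, y j • x j) - y i • x i))) • u := by
      rw [hβi i, hMeq, hc, hM, Matrix.add_mulVec, Matrix.smul_mulVec,
        vecMulVec_mulVec, hlin, smul_smul]
    have hsymdot : ∀ v : Fin k → ℝ, u ⬝ᵥ v = x i ⬝ᵥ Sxx⁻¹.mulVec v := by
      intro v
      rw [Matrix.dotProduct_mulVec, hvm, hu]
    set q : ℝ := x i ⬝ᵥ βhat with hq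
    have huc : u ⬝ᵥ ((∑ j, y j • x j) - y i • x i) = q - y i * P := by
      rw [hsymdot, hlin, dotProduct_sub, dotProduct_smul, ← hq, smul_eq_mul, ← hPdef]
    have hBu : xtil i ⬝ᵥ u = B i := by
      rw [hxtil i, dotProduct_comm, hsymdot, Matrix.mulVec_mulVec, Matrix.mulVec_mulVec,
        hB i, Matrix.mul_assoc]
    set r : ℝ := xtil i ⬝ᵥ βhat with hr
    have hx : x i ⬝ᵥ βhati i = (q - y i * P) + ((1 - P)⁻¹ * (q - y i * P)) * P := by
      rw [hβival, huc, dotProduct_add, dotProduct_sub, dotProduct_smul, dotProduct_smul,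
        smul_eq_mul, smul_eq_mul, ← hPdef, ← hq]
    have hxt : xtil i ⬝ᵥ βhati i = (r - y i * B i) + ((1 - P)⁻¹ * (q - y i * P)) * B i := by
      rw [hβival, huc, dotProduct_add, dotProduct_sub, dotProduct_smul, dotProduct_smul,
        smul_eq_mul, smul_eq_mul, hBu, ← hr]
    rw [hσ i, hx, hxt]
    field_simp
    ring
  have hAv : Matrix.vecMul βhat A = A.mulVec βhat := by
    rw [← hA, Matrix.vecMul_transpose, hA]
  have hxtb : ∀ i, xtil i ⬝ᵥ βhat = (Sxx⁻¹.mulVec (x i)) ⬝ᵥ A.mulVec βhat := by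
    intro i
    rw [hxtil i, dotProduct_comm, Matrix.dotProduct_mulVec, hAv, dotProduct_comm]
  have h1 : ∑ i, y i • (Sxx⁻¹.mulVec (x i)) = βhat := by
    rw [hβ, ← Matrix.mulVecLin_apply, map_sum]
    exact Finset.sum_congr rfl fun j _ => by
      rw [LinearMap.map_smul, Matrix.mulVecLin_apply]
  have hsum1 : ∑ i, y i * (xtil i ⬝ᵥ βhat) = βhat ⬝ᵥ A.mulVec βhat := by
    calc ∑ i, y i * (xtil i ⬝ᵥ βhat)
        = ∑ i, (y i • (Sxx⁻¹.mulVec (x i))) ⬝ᵥ (A.mulVec βhat) := by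
          refine Finset.sum_congr rfl fun i _ => ?_
          rw [hxtb i, smul_dotProduct, smul_eq_mul]
      _ = (∑ i, y i • (Sxx⁻¹.mulVec (x i))) ⬝ᵥ (A.mulVec βhat) := by
          rw [sum_dotProduct']
      _ = βhat ⬝ᵥ A.mulVec βhat := by rw [h1]
  rw [show (∑ i, y i * (xtil i ⬝ᵥ βhati i))
      = ∑ i, (y i * (xtil i ⬝ᵥ βhat) - B i * σhatsq i) from
      Finset.sum_congr rfl fun i _ => key i,
    Finset.sum_sub_distrib, hsum1]
end

section
/- Suppose y_i = x_i'β + ε_i where the ε_i are mutually independent, E[ε_i] = 0, and E[ε_i²] = σ_i². If max_i P_ii < 1, then the leave-out estimator θ̂ = β̂'Aβ̂ − Σ_{i=1}^n B_ii σ̂_i² is unbiased for θ = β'Aβ, i.e., E[θ̂] = β'Aβ. -/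
/-!
`β̂ = β + ∑ⱼ εⱼ • S⁻¹xⱼ` is affine in the errors, so, the errors being uncorrelated, only the
diagonal terms survive in `E[β̂'Aβ̂] = β'Aβ + ∑ⱼ Bⱼⱼ Var εⱼ`. The leave-one-out residual
`yᵢ - xᵢ'β̂₋ᵢ = εᵢ - ∑_{j ≠ i} cᵢⱼ εⱼ` no longer contains `xᵢ'β`, and `εᵢ` is uncorrelated with
every `εⱼ` it involves, so `E[σ̂ᵢ²] = Var εᵢ` exactly and the correction removes the bias.
The leverage bound `Pᵢᵢ < 1` makes `S - xᵢxᵢ'` invertible, by the matrix determinant lemma.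
-/

open Matrix BigOperators Finset MeasureTheory ProbabilityTheory

namespace Matrix

variable {ι κ R : Type*} [CommRing R]

theorem det_sub_vecMulVec [Fintype κ] [DecidableEq κ] {S : Matrix κ κ R} (hS : IsUnit S.det)
    (u v : κ → R) : (S - vecMulVec u v).det = S.det * (1 - v ⬝ᵥ S⁻¹ *ᵥ u) := by
  have hfac : S - vecMulVec u v
      = S * (1 + replicateCol Unit (-(S⁻¹ *ᵥ u)) * replicateRow Unit v) := by
    rw [← vecMulVec_eq, mul_add, mul_one, mul_vecMulVec, mulVec_neg, mulVec_mulVec,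
      mul_nonsing_inv _ hS, one_mulVec, neg_vecMulVec, sub_eq_add_neg]
  rw [hfac, det_mul, det_one_add_replicateCol_mul_replicateRow, dotProduct_neg, sub_eq_add_neg]

theorem isSymm_sum_vecMulVec_self (s : Finset ι) (x : ι → κ → R) :
    (∑ j ∈ s, vecMulVec (x j) (x j)).IsSymm := by
  simp only [IsSymm, transpose_sum, transpose_vecMulVec]

theorem IsSymm.mulVec_dotProduct_mulVec_mulVec [Fintype κ] {M : Matrix κ κ R} (hM : M.IsSymm)
    (N : Matrix κ κ R) (u w : κ → R) : M *ᵥ u ⬝ᵥ N *ᵥ (M *ᵥ w) = u ⬝ᵥ (M * N * M) *ᵥ w := by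
  have hMu : u ᵥ* M = M *ᵥ u := by rw [← vecMul_transpose, hM.eq]
  rw [← mulVec_mulVec, ← mulVec_mulVec, dotProduct_mulVec u M, hMu]

theorem sum_vecMulVec_self_mulVec [Fintype κ] (s : Finset ι) (x : ι → κ → R) (β : κ → R) :
    (∑ j ∈ s, vecMulVec (x j) (x j)) *ᵥ β = ∑ j ∈ s, (x j ⬝ᵥ β) • x j := by
  simp only [sum_mulVec, vecMulVec_mulVec, op_smul_eq_smul]

theorem inv_mulVec_sum_smul_eq_add [Fintype κ] [DecidableEq κ] (s : Finset ι) (x : ι → κ → R)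
    (β : κ → R) (e y : ι → R) (hy : ∀ j, y j = x j ⬝ᵥ β + e j)
    (hG : IsUnit (∑ j ∈ s, vecMulVec (x j) (x j)).det) :
    (∑ j ∈ s, vecMulVec (x j) (x j))⁻¹ *ᵥ ∑ j ∈ s, y j • x j
      = β + ∑ j ∈ s, e j • ((∑ j ∈ s, vecMulVec (x j) (x j))⁻¹ *ᵥ x j) := by
  have hsum : ∑ j ∈ s, y j • x j
      = (∑ j ∈ s, vecMulVec (x j) (x j)) *ᵥ β + ∑ j ∈ s, e j • x j := by
    simp only [sum_vecMulVec_self_mulVec, hy, add_smul, sum_add_distrib]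
  rw [hsum, mulVec_add, mulVec_mulVec, nonsing_inv_mul _ hG, one_mulVec, mulVec_sum]
  simp only [mulVec_smul]

theorem sub_dotProduct_inv_mulVec_sum_smul [Fintype κ] [DecidableEq κ] (s : Finset ι)
    (x : ι → κ → R) (β : κ → R) (e y : ι → R) (hy : ∀ j, y j = x j ⬝ᵥ β + e j)
    (hG : IsUnit (∑ j ∈ s, vecMulVec (x j) (x j)).det) (i : ι) :
    y i - x i ⬝ᵥ ((∑ j ∈ s, vecMulVec (x j) (x j))⁻¹ *ᵥ ∑ j ∈ s, y j • x j)
      = e i - ∑ j ∈ s, (x i ⬝ᵥ (∑ j ∈ s, vecMulVec (x j) (x j))⁻¹ *ᵥ x j) * e j := by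
  rw [inv_mulVec_sum_smul_eq_add s x β e y hy hG, hy, dotProduct_add, dotProduct_sum]
  simp only [dotProduct_smul, smul_eq_mul, mul_comm (e _)]
  ring

theorem add_sum_smul_dotProduct_add_sum_smul [Fintype ι] [Fintype κ] (β γ : κ → R)
    (v w : ι → κ → R) (e : ι → R) :
    (β + ∑ j, e j • v j) ⬝ᵥ (γ + ∑ j, e j • w j)
      = ∑ r, (β r + ∑ j, v j r * e j) * (γ r + ∑ j, w j r * e j) := by
  simp [dotProduct, Finset.sum_apply, mul_comm]

end Matrix

namespace ProbabilityTheory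

variable {Ω ι κ : Type*} [MeasurableSpace Ω] {μ : Measure Ω} [IsProbabilityMeasure μ]
  [Fintype ι] {ε : ι → Ω → ℝ}

theorem memLp_const_add_sum_mul (hε : ∀ j, MemLp (ε j) 2 μ) (p : ℝ) (a : ι → ℝ) :
    MemLp (fun ω => p + ∑ j, a j * ε j ω) 2 μ :=
  (memLp_const p).add (memLp_finsetSum _ fun j _ => (hε j).const_mul (a j))

theorem integrable_const_add_sum_mul_mul (hε : ∀ j, MemLp (ε j) 2 μ) (p q : ℝ) (a b : ι → ℝ) :
    Integrable (fun ω => (p + ∑ j, a j * ε j ω) * (q + ∑ j, b j * ε j ω)) μ :=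
  (memLp_const_add_sum_mul hε p a).integrable_mul (memLp_const_add_sum_mul hε q b)

theorem integral_const_add_sum_mul (hε : ∀ j, Integrable (ε j) μ) (hmean : ∀ j, μ[ε j] = 0)
    (p : ℝ) (a : ι → ℝ) : ∫ ω, p + ∑ j, a j * ε j ω ∂μ = p := by
  have hsum : Integrable (fun ω => ∑ j, a j * ε j ω) μ :=
    integrable_finsetSum _ fun j _ => (hε j).const_mul (a j)
  rw [integral_add (integrable_const p) hsum,
    integral_finsetSum _ fun j _ => (hε j).const_mul (a j)]
  simp [integral_const_mul, hmean]

theorem covariance_const_add_sum_mul (hε : ∀ j, MemLp (ε j) 2 μ) (p q : ℝ) (a b : ι → ℝ) :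
    cov[fun ω => p + ∑ j, a j * ε j ω, fun ω => q + ∑ j, b j * ε j ω; μ]
      = ∑ j, ∑ l, a j * b l * cov[ε j, ε l; μ] := by
  have hsum : ∀ c : ι → ℝ, Integrable (fun ω => ∑ j, c j * ε j ω) μ := fun c =>
    integrable_finsetSum _ fun j _ => ((hε j).integrable one_le_two).const_mul (c j)
  rw [covariance_const_add_left (hsum a), covariance_const_add_right (hsum b),
    covariance_fun_sum_fun_sum (fun j => (hε j).const_mul (a j)) fun j => (hε j).const_mul (b j)]
  simp only [covariance_const_mul_left, covariance_const_mul_right, mul_assoc, mul_left_comm]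

theorem integral_const_add_sum_mul_mul (hε : ∀ j, MemLp (ε j) 2 μ) (hmean : ∀ j, μ[ε j] = 0)
    (huncorr : Pairwise fun j l => cov[ε j, ε l; μ] = 0) (p q : ℝ) (a b : ι → ℝ) :
    ∫ ω, (p + ∑ j, a j * ε j ω) * (q + ∑ j, b j * ε j ω) ∂μ
      = p * q + ∑ j, a j * b j * Var[ε j; μ] := by
  have hint : ∀ j, Integrable (ε j) μ := fun j => (hε j).integrable one_le_two
  have hcov := covariance_eq_sub (memLp_const_add_sum_mul hε p a) (memLp_const_add_sum_mul hε q b)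
  rw [integral_const_add_sum_mul hint hmean, integral_const_add_sum_mul hint hmean,
    covariance_const_add_sum_mul hε] at hcov
  have hdiag : ∀ j, ∑ l, a j * b l * cov[ε j, ε l; μ] = a j * b j * Var[ε j; μ] := fun j => by
    rw [sum_eq_single j (fun l _ hlj => by rw [huncorr hlj.symm, mul_zero]) (by simp),
      covariance_self (hε j).aestronglyMeasurable.aemeasurable]
  simp only [hdiag, Pi.mul_apply] at hcov
  linarith

omit [Fintype ι] in
theorem integrable_const_add_mul_sub_sum (hε : ∀ j, MemLp (ε j) 2 μ) (i : ι) (p : ℝ)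
    (s : Finset ι) (c : ι → ℝ) :
    Integrable (fun ω => (p + ε i ω) * (ε i ω - ∑ j ∈ s, c j * ε j ω)) μ :=
  ((memLp_const p).add (hε i)).integrable_mul
    ((hε i).sub (memLp_finsetSum _ fun j _ => (hε j).const_mul (c j)))

theorem integral_const_add_mul_sub_sum_erase [DecidableEq ι] (hε : ∀ j, MemLp (ε j) 2 μ)
    (hmean : ∀ j, μ[ε j] = 0) (huncorr : Pairwise fun j l => cov[ε j, ε l; μ] = 0)
    (i : ι) (p : ℝ) (c : ι → ℝ) :
    ∫ ω, (p + ε i ω) * (ε i ω - ∑ j ∈ univ.erase i, c j * ε j ω) ∂μ = Var[ε i; μ] := by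
  have hleft : ∀ ω, ε i ω = ∑ j, (if j = i then 1 else 0) * ε j ω := fun ω => by simp
  have hright : ∀ ω, ε i ω - ∑ j ∈ univ.erase i, c j * ε j ω
      = 0 + ∑ j, (if j = i then 1 else -c j) * ε j ω := fun ω => by
    rw [← add_sum_erase _ _ (mem_univ i), if_pos rfl, one_mul, zero_add, sub_eq_add_neg,
      ← sum_neg_distrib]
    exact congrArg _ (sum_congr rfl fun j hj => by rw [if_neg (ne_of_mem_erase hj), neg_mul])
  simp_rw [hright, hleft, integral_const_add_sum_mul_mul hε hmean huncorr]
  rw [Fintype.sum_eq_single i fun j hj => by simp [hj]]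
  simp

theorem integrable_add_sum_smul_dotProduct_add_sum_smul [Fintype κ]
    (hε : ∀ j, MemLp (ε j) 2 μ) (β γ : κ → ℝ) (v w : ι → κ → ℝ) :
    Integrable (fun ω => (β + ∑ j, ε j ω • v j) ⬝ᵥ (γ + ∑ j, ε j ω • w j)) μ := by
  simp_rw [add_sum_smul_dotProduct_add_sum_smul]
  exact integrable_finsetSum _ fun r _ => integrable_const_add_sum_mul_mul hε _ _ _ _

theorem integral_add_sum_smul_dotProduct_add_sum_smul [Fintype κ]
    (hε : ∀ j, MemLp (ε j) 2 μ) (hmean : ∀ j, μ[ε j] = 0)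
    (huncorr : Pairwise fun j l => cov[ε j, ε l; μ] = 0) (β γ : κ → ℝ) (v w : ι → κ → ℝ) :
    ∫ ω, (β + ∑ j, ε j ω • v j) ⬝ᵥ (γ + ∑ j, ε j ω • w j) ∂μ
      = β ⬝ᵥ γ + ∑ j, (v j ⬝ᵥ w j) * Var[ε j; μ] := by
  simp_rw [add_sum_smul_dotProduct_add_sum_smul]
  rw [integral_finsetSum _ fun r _ => integrable_const_add_sum_mul_mul hε _ _ _ _]
  simp_rw [integral_const_add_sum_mul_mul hε hmean huncorr]
  rw [sum_add_distrib, sum_comm]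
  simp only [dotProduct, sum_mul]

end ProbabilityTheory

theorem leave_out_estimator_unbiased_general {Ω : Type*} [MeasurableSpace Ω]
    (μ : Measure Ω) [IsProbabilityMeasure μ]
    {n k : ℕ} (x : Fin n → Fin k → ℝ) (β : Fin k → ℝ)
    (ε : Fin n → Ω → ℝ)
    (hindep : iIndepFun ε μ)
    (hL2 : ∀ i, MemLp (ε i) 2 μ)
    (hmean : ∀ i, ∫ ω, ε i ω ∂μ = 0)
    (y : Fin n → Ω → ℝ) (hy : ∀ i ω, y i ω = x i ⬝ᵥ β + ε i ω)
    (A Sxx : Matrix (Fin k) (Fin k) ℝ)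
    (hSxx : Sxx = ∑ i, vecMulVec (x i) (x i))
    (hS : IsUnit Sxx.det)
    (hP : ∀ i, x i ⬝ᵥ Sxx⁻¹.mulVec (x i) < 1)
    (βhat : Ω → Fin k → ℝ)
    (hβ : ∀ ω, βhat ω = Sxx⁻¹.mulVec (∑ j, y j ω • x j))
    (βhati : Fin n → Ω → Fin k → ℝ)
    (hβi : ∀ i ω, βhati i ω = (Sxx - vecMulVec (x i) (x i))⁻¹.mulVec
      (∑ j ∈ Finset.univ.erase i, y j ω • x j)) :
    ∫ ω, (βhat ω ⬝ᵥ A.mulVec (βhat ω)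
        - ∑ i, (x i ⬝ᵥ (Sxx⁻¹ * A * Sxx⁻¹).mulVec (x i))
            * (y i ω * (y i ω - x i ⬝ᵥ βhati i ω))) ∂μ
      = β ⬝ᵥ A.mulVec β := by
  have huncorr : Pairwise fun j l => cov[ε j, ε l; μ] = 0 := fun j l hjl =>
    (hindep.indepFun hjl).covariance_eq_zero (hL2 j) (hL2 l)
  have hloo : ∀ i, Sxx - vecMulVec (x i) (x i) = ∑ j ∈ univ.erase i, vecMulVec (x j) (x j) :=
    fun i => by rw [hSxx, ← add_sum_erase _ _ (mem_univ i), add_sub_cancel_left]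
  have hSloo : ∀ i, IsUnit (Sxx - vecMulVec (x i) (x i)).det := fun i => by
    rw [det_sub_vecMulVec hS]
    exact hS.mul (sub_ne_zero.2 (hP i).ne').isUnit
  have hβhat : ∀ ω, βhat ω = β + ∑ j, ε j ω • (Sxx⁻¹ *ᵥ x j) := fun ω => by
    rw [hβ, hSxx]
    exact inv_mulVec_sum_smul_eq_add _ x β _ _ (hy · ω) (hSxx ▸ hS)
  have hres : ∀ i ω, y i ω - x i ⬝ᵥ βhati i ω = ε i ω
      - ∑ j ∈ univ.erase i, (x i ⬝ᵥ (Sxx - vecMulVec (x i) (x i))⁻¹ *ᵥ x j) * ε j ω := by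
    intro i ω
    rw [hβi, hloo]
    exact sub_dotProduct_inv_mulVec_sum_smul _ x β _ _ (hy · ω) (hloo i ▸ hSloo i) i
  have hsymm : Sxx⁻¹.IsSymm := hSxx ▸ (isSymm_sum_vecMulVec_self univ x).inv
  have hresInt := fun i => integrable_const_add_mul_sub_sum hL2 i (x i ⬝ᵥ β) (univ.erase i)
  simp_rw [hres, hy, hβhat, mulVec_add, mulVec_sum, mulVec_smul]
  rw [integral_sub (integrable_add_sum_smul_dotProduct_add_sum_smul hL2 _ _ _ _)
      (integrable_finsetSum _ fun i _ => (hresInt i _).const_mul _),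
    integral_finsetSum _ fun i _ => (hresInt i _).const_mul _,
    integral_add_sum_smul_dotProduct_add_sum_smul hL2 hmean huncorr]
  simp_rw [integral_const_mul, integral_const_add_mul_sub_sum_erase hL2 hmean huncorr,
    hsymm.mulVec_dotProduct_mulVec_mulVec]
  ring

/-- with independent mean-zero heteroscedastic errors and all leverages
strictly below one, the leave-out estimator `θ̂ = β̂'Aβ̂ − Σ_i B_ii σ̂_i²` is unbiased
for `θ = β'Aβ`. -/
theorem leave_out_estimator_unbiased {Ω : Type*} [MeasurableSpace Ω]
    (μ : Measure Ω) [IsProbabilityMeasure μ]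
    {n k : ℕ} (x : Fin n → Fin k → ℝ) (β : Fin k → ℝ)
    (ε : Fin n → Ω → ℝ) (σ : Fin n → ℝ)
    (hmeas : ∀ i, Measurable (ε i))
    (hindep : iIndepFun ε μ)
    (hL2 : ∀ i, MemLp (ε i) 2 μ)
    (hmean : ∀ i, ∫ ω, ε i ω ∂μ = 0)
    (hvar : ∀ i, ∫ ω, (ε i ω) ^ 2 ∂μ = (σ i) ^ 2)
    (y : Fin n → Ω → ℝ) (hy : ∀ i ω, y i ω = x i ⬝ᵥ β + ε i ω)
    (A Sxx : Matrix (Fin k) (Fin k) ℝ)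
    (hA : A.IsSymm)
    (hSxx : Sxx = ∑ i, vecMulVec (x i) (x i))
    (hS : IsUnit Sxx.det)
    (hP : ∀ i, x i ⬝ᵥ Sxx⁻¹.mulVec (x i) < 1)
    (βhat : Ω → Fin k → ℝ)
    (hβ : ∀ ω, βhat ω = Sxx⁻¹.mulVec (∑ j, y j ω • x j))
    (βhati : Fin n → Ω → Fin k → ℝ)
    (hβi : ∀ i ω, βhati i ω = (Sxx - vecMulVec (x i) (x i))⁻¹.mulVec
      (∑ j ∈ Finset.univ.erase i, y j ω • x j)) :
    ∫ ω, (βhat ω ⬝ᵥ A.mulVec (βhat ω)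
        - ∑ i, (x i ⬝ᵥ (Sxx⁻¹ * A * Sxx⁻¹).mulVec (x i))
            * (y i ω * (y i ω - x i ⬝ᵥ βhati i ω))) ∂μ
      = β ⬝ᵥ A.mulVec β :=
  leave_out_estimator_unbiased_general μ x β ε hindep hL2 hmean y hy A Sxx hSxx hS hP βhat hβ βhati
    hβi
end

section
/- If there exists an index i with P_ii = 1 (i.e., x_i' S_xx⁻¹ x_i = 1), then M_{iℓ} = 0 for all ℓ, where M_{iℓ} = 1{i=ℓ} − x_i' S_xx⁻¹ x_ℓ. Consequently, no quadratic estimator y'Dy with zero diagonal (D_ii = 0 for all i) can satisfy X'DX = S_xx, so no unbiased estimator of β'S_xxβ exists under unrestricted heteroscedasticity. -/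
open Matrix BigOperators Finset

/-- if some leverage `P_ii = 1` then the `i`-th row of `M = I − P`
vanishes, and no zero-diagonal quadratic estimator `y'Dy` can satisfy `X'DX = S_xx`,
so no unbiased estimator of `β'S_xxβ` exists under unrestricted heteroscedasticity. -/
theorem no_unbiased_estimator_when_leverage_one {n k : ℕ}
    (X : Matrix (Fin n) (Fin k) ℝ)
    (Sxx : Matrix (Fin k) (Fin k) ℝ)
    (hSxx : Sxx = Xᵀ * X)
    (hS : IsUnit Sxx.det)
    (P M : Matrix (Fin n) (Fin n) ℝ)
    (hPdef : P = X * Sxx⁻¹ * Xᵀ)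
    (hMdef : M = 1 - P)
    (i : Fin n)
    (hPi : P i i = 1) :
    (∀ ℓ, M i ℓ = 0) ∧
      ∀ D : Matrix (Fin n) (Fin n) ℝ, (∀ j, D j j = 0) → Xᵀ * D * X ≠ Sxx := by
  have hSsym : Sxxᵀ = Sxx := by rw [hSxx, transpose_mul, transpose_transpose]
  have hSinvsym : (Sxx⁻¹)ᵀ = Sxx⁻¹ := by
    rw [Matrix.transpose_nonsing_inv, hSsym]
  have hPsym : Pᵀ = P := by
    rw [hPdef, transpose_mul, transpose_mul, transpose_transpose, hSinvsym,
      Matrix.mul_assoc]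
  have hP2 : P * P = P := by
    rw [hPdef, Matrix.mul_assoc (X * Sxx⁻¹) Xᵀ (X * Sxx⁻¹ * Xᵀ),
      ← Matrix.mul_assoc Xᵀ (X * Sxx⁻¹) Xᵀ, ← Matrix.mul_assoc Xᵀ X Sxx⁻¹,
      ← hSxx, Matrix.mul_nonsing_inv _ hS, Matrix.one_mul]
  have hM2 : M * M = M := by
    rw [hMdef, Matrix.sub_mul, Matrix.mul_sub, Matrix.mul_sub, hP2,
      Matrix.one_mul, Matrix.mul_one]
    abel_nf
    rw [Matrix.one_mul]
  have hMsym : Mᵀ = M := by rw [hMdef, transpose_sub, transpose_one, hPsym]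
  have hMii : M i i = 0 := by
    rw [hMdef]
    simp [Matrix.sub_apply, Matrix.one_apply_eq, hPi]
  have key : ∀ ℓ, M i ℓ = 0 := by
    have h0 : ∑ ℓ, M i ℓ * M i ℓ = 0 := by
      have hmm : (M * M) i i = M i i := by rw [hM2]
      rw [Matrix.mul_apply] at hmm
      have hsymm : ∀ ℓ, M ℓ i = M i ℓ := fun ℓ => by
        conv_lhs => rw [← hMsym]
        rw [Matrix.transpose_apply]
      calc ∑ ℓ, M i ℓ * M i ℓ = ∑ ℓ, M i ℓ * M ℓ i := by
            exact Finset.sum_congr rfl fun ℓ _ => by rw [hsymm]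
        _ = 0 := by rw [hmm, hMii]
    intro ℓ
    have := (Finset.sum_eq_zero_iff_of_nonneg
      (fun ℓ _ => mul_self_nonneg (M i ℓ))).mp h0 ℓ (Finset.mem_univ ℓ)
    exact mul_self_eq_zero.mp this
  refine ⟨key, ?_⟩
  intro D hDdiag hDX
  -- P row/column at i is the standard basis vector
  have hProw : ∀ ℓ, P i ℓ = (1 : Matrix (Fin n) (Fin n) ℝ) i ℓ := by
    intro ℓ
    have := key ℓ
    rw [hMdef, Matrix.sub_apply] at this
    linarith
  have hPcol : ∀ ℓ, P ℓ i = (1 : Matrix (Fin n) (Fin n) ℝ) i ℓ := by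
    intro ℓ
    rw [← hPsym, Matrix.transpose_apply, hProw]
  set e : Fin n → ℝ := Pi.single i 1 with he
  set v : Fin k → ℝ := Sxx⁻¹ *ᵥ (Xᵀ *ᵥ e) with hv
  have hXv : X *ᵥ v = e := by
    funext ℓ
    have : X *ᵥ v = P *ᵥ e := by
      rw [hv, hPdef, Matrix.mulVec_mulVec, Matrix.mulVec_mulVec]
    rw [this]
    simp only [Matrix.mulVec, dotProduct, he]
    rw [Finset.sum_eq_single i]
    · rw [Pi.single_eq_same, mul_one, hPcol]
      simp [Matrix.one_apply, eq_comm, Pi.single_apply]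
    · intro b _ hb; rw [Pi.single_eq_of_ne hb, mul_zero]
    · intro h; exact absurd (Finset.mem_univ i) h
  have hquad : v ⬝ᵥ (Sxx *ᵥ v) = D i i := by
    conv_lhs => rw [← hDX]
    rw [Matrix.mul_assoc, ← Matrix.mulVec_mulVec, ← Matrix.mulVec_mulVec,
      Matrix.dotProduct_mulVec, Matrix.vecMul_transpose, hXv]
    simp [he, Matrix.mulVec, dotProduct, Pi.single_apply]
  have hquad1 : v ⬝ᵥ (Sxx *ᵥ v) = 1 := by
    rw [hSxx, ← Matrix.mulVec_mulVec, Matrix.dotProduct_mulVec,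
      Matrix.vecMul_transpose, hXv]
    simp [he, dotProduct, Pi.single_apply]
  rw [hquad, hDdiag i] at hquad1
  exact zero_ne_one hquad1
end

section
/- Consider the degrees-of-freedom estimator σ̂²_HO = (1/(n−k)) Σ_i (y_i − x_i'β̂)² and the estimator θ̂_HO = β̂'Aβ̂ − Σ_i B_ii σ̂²_HO. Its bias is E[θ̂_HO] − θ = σ_{nB,σ²} + S_B · (n/(n−k)) · σ_{P,σ²}, where σ_{nB,σ²} = Σ_i B_ii (σ_i² − σ̄²), σ̄² = (1/n) Σ_i σ_i², S_B = Σ_i B_ii, and σ_{P,σ²} = (1/n) Σ_i P_ii (σ_i² − σ̄²). In particular θ̂_HO is unbiased under homoscedasticity (σ_i² constant) or balanced design (B_ii, P_ii constant in i). -/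
/-!
Write `X` for the design matrix with rows `x i` and `H = X (XᵀX)⁻¹ Xᵀ` for the hat matrix, whose
diagonal is `P`. Then `β̂ = β + (XᵀX)⁻¹ Xᵀ ε` and the residual vector is `(1 - H) ε`, where `1 - H`
is symmetric and idempotent, so the residual sum of squares is the quadratic form `εᵀ (1 - H) ε`.
Thus `θ̂_HO = β'Aβ + (linear in ε) + εᵀ Q ε` with
`Q = X (XᵀX)⁻¹ A (XᵀX)⁻¹ Xᵀ - S_B / (n - k) • (1 - H)`, and for independent centred errors only the
diagonal of `Q` survives in expectation:
`E θ̂_HO = β'Aβ + Σ_i (B_i - S_B / (n - k) (1 - P_i)) σ_i²`.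
Since `Σ_i P_i = tr H = k`, rearranging this around the average variance gives the stated bias.
-/

open Matrix BigOperators Finset MeasureTheory ProbabilityTheory

namespace Matrix

variable {ι m : Type*}

section CommSemiring

variable {R : Type*} [CommSemiring R]

theorem sum_vecMulVec_eq_transpose_mul_self [Fintype ι] (x : ι → m → R) :
    ∑ i, vecMulVec (x i) (x i) = (of x)ᵀ * of x := by
  ext a b
  simp [Matrix.sum_apply, mul_apply, vecMulVec_apply]

theorem sum_smul_eq_transpose_mulVec [Fintype ι] (x : ι → m → R) (y : ι → R) :
    ∑ j, y j • x j = (of x)ᵀ *ᵥ y := by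
  rw [mulVec_transpose, vecMul_eq_sum]; rfl

theorem mul_mul_transpose_apply [Fintype m] (X : Matrix ι m R) (N : Matrix m m R) (a b : ι) :
    (X * N * Xᵀ) a b = X a ⬝ᵥ N *ᵥ X b := by
  rw [Matrix.mul_assoc, mul_apply, dotProduct]
  simp [mulVec, dotProduct, mul_apply, Finset.mul_sum]

theorem dotProduct_mulVec_eq_sum [Fintype m] (u w : m → R) (Q : Matrix m m R) :
    u ⬝ᵥ Q *ᵥ w = ∑ a, ∑ b, Q a b * (u a * w b) := by
  simp only [dotProduct, mulVec, Finset.mul_sum]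
  exact Finset.sum_congr rfl fun a _ ↦ Finset.sum_congr rfl fun b _ ↦ by ring

theorem add_dotProduct_mulVec_add [Fintype m] (A : Matrix m m R) (b u : m → R) :
    (b + u) ⬝ᵥ A *ᵥ (b + u) = b ⬝ᵥ A *ᵥ b + (b ᵥ* A + A *ᵥ b) ⬝ᵥ u + u ⬝ᵥ A *ᵥ u := by
  rw [mulVec_add, dotProduct_add, add_dotProduct, add_dotProduct, add_dotProduct,
    dotProduct_mulVec b A u, dotProduct_comm u (A *ᵥ b)]
  ring

theorem mulVec_dotProduct_mulVec [Fintype ι] [Fintype m] (C : Matrix m ι R) (A : Matrix m m R)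
    (u w : ι → R) : (C *ᵥ u) ⬝ᵥ A *ᵥ (C *ᵥ w) = u ⬝ᵥ (Cᵀ * A * C) *ᵥ w := by
  rw [← mulVec_mulVec, ← mulVec_mulVec, dotProduct_mulVec u, vecMul_transpose]

end CommSemiring

theorem sum_sq_sub_dotProduct_eq [Fintype ι] [Fintype m] {R : Type*} [CommRing R]
    (x : ι → m → R) (y : ι → R) (b : m → R) :
    ∑ i, (y i - x i ⬝ᵥ b) ^ 2 = (y - of x *ᵥ b) ⬝ᵥ (y - of x *ᵥ b) := by
  simp only [dotProduct, sq]; rfl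

variable [Fintype ι] [Fintype m] [DecidableEq m] (X : Matrix ι m ℝ)

noncomputable def olsMatrix : Matrix m ι ℝ := (Xᵀ * X)⁻¹ * Xᵀ

noncomputable def hatMatrix : Matrix ι ι ℝ := X * olsMatrix X

theorem hatMatrix_eq : hatMatrix X = X * (Xᵀ * X)⁻¹ * Xᵀ := by
  rw [hatMatrix, olsMatrix, Matrix.mul_assoc]

theorem hatMatrix_transpose : (hatMatrix X)ᵀ = hatMatrix X := by
  simp [hatMatrix_eq, transpose_nonsing_inv, Matrix.mul_assoc]

theorem transpose_olsMatrix_mul_mul (A : Matrix m m ℝ) :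
    (olsMatrix X)ᵀ * A * olsMatrix X = X * ((Xᵀ * X)⁻¹ * A * (Xᵀ * X)⁻¹) * Xᵀ := by
  simp [olsMatrix, transpose_nonsing_inv, Matrix.mul_assoc]

variable {X}

theorem olsMatrix_mulVec_add (hX : IsUnit (Xᵀ * X).det) (β : m → ℝ) (e : ι → ℝ) :
    olsMatrix X *ᵥ (X *ᵥ β + e) = β + olsMatrix X *ᵥ e := by
  rw [mulVec_add, mulVec_mulVec, olsMatrix, Matrix.mul_assoc, nonsing_inv_mul _ hX, one_mulVec]

theorem hatMatrix_mul_self (hX : IsUnit (Xᵀ * X).det) :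
    hatMatrix X * hatMatrix X = hatMatrix X := by
  simp only [hatMatrix_eq, Matrix.mul_assoc]
  rw [← Matrix.mul_assoc Xᵀ X, ← Matrix.mul_assoc (Xᵀ * X)⁻¹, nonsing_inv_mul _ hX, Matrix.one_mul]

theorem trace_hatMatrix (hX : IsUnit (Xᵀ * X).det) :
    (hatMatrix X).trace = Fintype.card m := by
  rw [hatMatrix, trace_mul_comm, olsMatrix, Matrix.mul_assoc, nonsing_inv_mul _ hX, trace_one]

variable [DecidableEq ι]

theorem sub_mulVec_add_olsMatrix_mulVec (β : m → ℝ) (e : ι → ℝ) :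
    X *ᵥ β + e - X *ᵥ (β + olsMatrix X *ᵥ e) = (1 - hatMatrix X) *ᵥ e := by
  rw [mulVec_add, mulVec_mulVec, sub_mulVec, one_mulVec, ← hatMatrix]
  abel

theorem transpose_one_sub_hatMatrix_mul_self (hX : IsUnit (Xᵀ * X).det) :
    (1 - hatMatrix X)ᵀ * (1 - hatMatrix X) = 1 - hatMatrix X := by
  rw [transpose_sub, transpose_one, hatMatrix_transpose, sub_mul, mul_sub, mul_sub,
    hatMatrix_mul_self hX]
  simp

theorem quadForm_ols_sub_mul_rss_eq (hX : IsUnit (Xᵀ * X).det) (A : Matrix m m ℝ)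
    (β : m → ℝ) (e : ι → ℝ) (s : ℝ) :
    let βhat := olsMatrix X *ᵥ (X *ᵥ β + e)
    let r := X *ᵥ β + e - X *ᵥ βhat
    βhat ⬝ᵥ A *ᵥ βhat - s * (r ⬝ᵥ r) = β ⬝ᵥ A *ᵥ β + ((β ᵥ* A + A *ᵥ β) ᵥ* olsMatrix X) ⬝ᵥ e
      + e ⬝ᵥ ((olsMatrix X)ᵀ * A * olsMatrix X - s • (1 - hatMatrix X)) *ᵥ e := by
  intro βhat r
  have hβhat : βhat = β + olsMatrix X *ᵥ e := olsMatrix_mulVec_add hX β e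
  have hrss : r ⬝ᵥ r = e ⬝ᵥ (1 - hatMatrix X) *ᵥ e := by
    have hr : r = (1 - hatMatrix X) *ᵥ e := by rw [← sub_mulVec_add_olsMatrix_mulVec, ← hβhat]
    calc r ⬝ᵥ r = e ⬝ᵥ ((1 - hatMatrix X)ᵀ * 1 * (1 - hatMatrix X)) *ᵥ e := by
          rw [← mulVec_dotProduct_mulVec, one_mulVec, hr]
      _ = e ⬝ᵥ (1 - hatMatrix X) *ᵥ e := by
          rw [Matrix.mul_one, transpose_one_sub_hatMatrix_mul_self hX]
  rw [hrss, hβhat, add_dotProduct_mulVec_add, dotProduct_mulVec _ (olsMatrix X),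
    mulVec_dotProduct_mulVec, sub_mulVec ((olsMatrix X)ᵀ * A * olsMatrix X), dotProduct_sub,
    smul_mulVec, dotProduct_smul, smul_eq_mul]
  ring

end Matrix

namespace ProbabilityTheory

variable {ι Ω : Type*} [MeasurableSpace Ω] {μ : Measure Ω} {ε : ι → Ω → ℝ} {v : ι → ℝ}

theorem integral_mul_of_iIndepFun [DecidableEq ι] (hindep : iIndepFun ε μ)
    (hL2 : ∀ i, MemLp (ε i) 2 μ) (hmean : ∀ i, ∫ ω, ε i ω ∂μ = 0)
    (hvar : ∀ i, ∫ ω, ε i ω ^ 2 ∂μ = v i) (a b : ι) :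
    ∫ ω, ε a ω * ε b ω ∂μ = if a = b then v a else 0 := by
  rcases eq_or_ne a b with rfl | hab
  · simpa only [sq, if_true] using hvar a
  · rw [if_neg hab]
    simpa [hmean a] using (hindep.indepFun hab).integral_mul_eq_mul_integral
      (hL2 a).aestronglyMeasurable (hL2 b).aestronglyMeasurable

variable [Fintype ι]

theorem integral_quadForm_of_iIndepFun (hindep : iIndepFun ε μ) (hL2 : ∀ i, MemLp (ε i) 2 μ)
    (hmean : ∀ i, ∫ ω, ε i ω ∂μ = 0) (hvar : ∀ i, ∫ ω, ε i ω ^ 2 ∂μ = v i) (Q : Matrix ι ι ℝ) :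
    Integrable (fun ω ↦ (fun i ↦ ε i ω) ⬝ᵥ Q *ᵥ (fun i ↦ ε i ω)) μ ∧
      ∫ ω, (fun i ↦ ε i ω) ⬝ᵥ Q *ᵥ (fun i ↦ ε i ω) ∂μ = ∑ i, Q i i * v i := by
  classical
  have hprod (a b : ι) : Integrable (fun ω ↦ Q a b * (ε a ω * ε b ω)) μ :=
    ((hL2 a).integrable_mul (hL2 b)).const_mul (Q a b)
  simp_rw [dotProduct_mulVec_eq_sum]
  refine ⟨integrable_finsetSum _ fun a _ ↦ integrable_finsetSum _ fun b _ ↦ hprod a b, ?_⟩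
  calc ∫ ω, ∑ a, ∑ b, Q a b * (ε a ω * ε b ω) ∂μ
      = ∑ a, ∑ b, Q a b * ∫ ω, ε a ω * ε b ω ∂μ := by
        refine (integral_finsetSum _ fun a _ ↦ integrable_finsetSum _ fun b _ ↦ hprod a b).trans ?_
        refine Finset.sum_congr rfl fun a _ ↦ (integral_finsetSum _ fun b _ ↦ hprod a b).trans ?_
        exact Finset.sum_congr rfl fun b _ ↦ integral_const_mul _ _
    _ = ∑ i, Q i i * v i := by
        simp [integral_mul_of_iIndepFun hindep hL2 hmean hvar]

theorem integral_add_dotProduct_add_quadForm_of_iIndepFun [IsProbabilityMeasure μ]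
    (hindep : iIndepFun ε μ) (hL2 : ∀ i, MemLp (ε i) 2 μ)
    (hmean : ∀ i, ∫ ω, ε i ω ∂μ = 0) (hvar : ∀ i, ∫ ω, ε i ω ^ 2 ∂μ = v i)
    (c : ℝ) (l : ι → ℝ) (Q : Matrix ι ι ℝ) :
    ∫ ω, c + l ⬝ᵥ (fun i ↦ ε i ω) + (fun i ↦ ε i ω) ⬝ᵥ Q *ᵥ (fun i ↦ ε i ω) ∂μ
      = c + ∑ i, Q i i * v i := by
  have hint (i : ι) : Integrable (fun ω ↦ l i * ε i ω) μ :=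
    ((hL2 i).integrable one_le_two).const_mul (l i)
  have hlin : Integrable (fun ω ↦ l ⬝ᵥ (fun i ↦ ε i ω)) μ := integrable_finsetSum _ fun i _ ↦ hint i
  have hlin_zero : ∫ ω, l ⬝ᵥ (fun i ↦ ε i ω) ∂μ = 0 := by
    refine (integral_finsetSum _ fun i _ ↦ hint i).trans ?_
    simp [integral_const_mul, hmean]
  obtain ⟨hquad, hquad_eq⟩ := integral_quadForm_of_iIndepFun hindep hL2 hmean hvar Q
  have haffine : Integrable (fun ω ↦ c + l ⬝ᵥ (fun i ↦ ε i ω)) μ := (integrable_const c).add hlin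
  rw [integral_add haffine hquad, integral_add (integrable_const c) hlin, hlin_zero, hquad_eq,
    integral_const, probReal_univ, one_smul, add_zero]

end ProbabilityTheory

section Average

variable {n : ℕ}

theorem sum_sub_mul_one_sub_mul_eq {d : ℕ} (hdn : d < n) (B P v : Fin n → ℝ)
    (hP : ∑ i, P i = d) :
    ∑ i, (B i - (∑ j, B j) * (1 / ((n : ℝ) - d)) * (1 - P i)) * v i
      = ∑ i, B i * (v i - 1 / (n : ℝ) * ∑ j, v j)
        + (∑ i, B i) * ((n : ℝ) / ((n : ℝ) - d))
          * (1 / (n : ℝ) * ∑ i, P i * (v i - 1 / (n : ℝ) * ∑ j, v j)) := by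
  have hn : (n : ℝ) ≠ 0 := Nat.cast_ne_zero.mpr (by omega)
  have hnd : (n : ℝ) - d ≠ 0 := sub_ne_zero.mpr (by exact_mod_cast hdn.ne')
  set c := (∑ j, B j) * (1 / ((n : ℝ) - d)) with hc
  set a := 1 / (n : ℝ) * ∑ j, v j with ha
  have hlhs : ∑ i, (B i - c * (1 - P i)) * v i
      = ∑ i, B i * v i - c * (∑ i, v i - ∑ i, P i * v i) := by
    simp only [Finset.mul_sum, ← Finset.sum_sub_distrib]
    exact Finset.sum_congr rfl fun i _ ↦ by ring
  have hcentred (f : Fin n → ℝ) : ∑ i, f i * (v i - a) = ∑ i, f i * v i - (∑ i, f i) * a := by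
    simp only [mul_sub, Finset.sum_sub_distrib, Finset.sum_mul]
  rw [hlhs, hcentred, hcentred, hP, ha, hc]
  field_simp
  ring

theorem sub_average_eq_zero_of_forall_eq {v : Fin n → ℝ} (hv : ∀ i j, v i = v j)
    (i : Fin n) :
    v i - 1 / (n : ℝ) * ∑ j, v j = 0 := by
  have hn : (n : ℝ) ≠ 0 := by exact_mod_cast (Fin.pos i).ne'
  simp [← hv i, hn]

theorem sum_mul_sub_average_eq_zero_of_forall_eq {f : Fin n → ℝ} (hf : ∀ i j, f i = f j)
    (v : Fin n → ℝ) :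
    ∑ i, f i * (v i - 1 / (n : ℝ) * ∑ j, v j) = 0 := by
  rcases Nat.eq_zero_or_pos n with rfl | hn
  · simp
  · have hn' : (n : ℝ) ≠ 0 := by exact_mod_cast hn.ne'
    rw [Finset.sum_congr rfl fun i _ ↦ by rw [hf i ⟨0, hn⟩], ← Finset.mul_sum,
      Finset.sum_sub_distrib]
    simp [hn']

end Average

theorem homoscedasticity_only_estimator_bias_general {Ω : Type*} [MeasurableSpace Ω]
    (μ : Measure Ω) [IsProbabilityMeasure μ]
    {n k : ℕ} (hkn : k < n)
    (x : Fin n → Fin k → ℝ) (β : Fin k → ℝ)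
    (ε : Fin n → Ω → ℝ) (σ : Fin n → ℝ)
    (hindep : iIndepFun ε μ)
    (hL2 : ∀ i, MemLp (ε i) 2 μ)
    (hmean : ∀ i, ∫ ω, ε i ω ∂μ = 0)
    (hvar : ∀ i, ∫ ω, (ε i ω) ^ 2 ∂μ = (σ i) ^ 2)
    (y : Fin n → Ω → ℝ) (hy : ∀ i ω, y i ω = x i ⬝ᵥ β + ε i ω)
    (A Sxx : Matrix (Fin k) (Fin k) ℝ)
    (hSxx : Sxx = ∑ i, vecMulVec (x i) (x i))
    (hS : IsUnit Sxx.det)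
    (βhat : Ω → Fin k → ℝ)
    (hβ : ∀ ω, βhat ω = Sxx⁻¹.mulVec (∑ j, y j ω • x j))
    (σHOsq : Ω → ℝ)
    (hσHO : ∀ ω, σHOsq ω = (1 / ((n : ℝ) - k)) * ∑ i, (y i ω - x i ⬝ᵥ βhat ω) ^ 2)
    (θHO : Ω → ℝ)
    (hθHO : ∀ ω, θHO ω = βhat ω ⬝ᵥ A.mulVec (βhat ω)
      - (∑ i, x i ⬝ᵥ (Sxx⁻¹ * A * Sxx⁻¹).mulVec (x i)) * σHOsq ω)
    (B P : Fin n → ℝ)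
    (hB : ∀ i, B i = x i ⬝ᵥ (Sxx⁻¹ * A * Sxx⁻¹).mulVec (x i))
    (hP : ∀ i, P i = x i ⬝ᵥ Sxx⁻¹.mulVec (x i))
    (sbar : ℝ) (hsbar : sbar = (1 / (n : ℝ)) * ∑ i, (σ i) ^ 2) :
    (∫ ω, θHO ω ∂μ - β ⬝ᵥ A.mulVec β
      = (∑ i, B i * ((σ i) ^ 2 - sbar))
        + (∑ i, B i) * ((n : ℝ) / ((n : ℝ) - k))
            * ((1 / (n : ℝ)) * ∑ i, P i * ((σ i) ^ 2 - sbar))) ∧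
    ((∀ i j, (σ i) ^ 2 = (σ j) ^ 2) → ∫ ω, θHO ω ∂μ = β ⬝ᵥ A.mulVec β) ∧
    ((∀ i j, B i = B j ∧ P i = P j) → ∫ ω, θHO ω ∂μ = β ⬝ᵥ A.mulVec β) := by
  set X : Matrix (Fin n) (Fin k) ℝ := of x
  rw [sum_vecMulVec_eq_transpose_mul_self] at hSxx
  subst hSxx hsbar
  set s := (∑ i, B i) * (1 / ((n : ℝ) - k))
  have hBdiag (i : Fin n) : ((olsMatrix X)ᵀ * A * olsMatrix X) i i = B i := by
    rw [hB, transpose_olsMatrix_mul_mul, mul_mul_transpose_apply]; rfl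
  have hPdiag (i : Fin n) : hatMatrix X i i = P i := by
    rw [hP, hatMatrix_eq, mul_mul_transpose_apply]; rfl
  have hθ (ω : Ω) : θHO ω = β ⬝ᵥ A *ᵥ β + ((β ᵥ* A + A *ᵥ β) ᵥ* olsMatrix X) ⬝ᵥ (fun i ↦ ε i ω)
      + (fun i ↦ ε i ω) ⬝ᵥ ((olsMatrix X)ᵀ * A * olsMatrix X - s • (1 - hatMatrix X))
        *ᵥ (fun i ↦ ε i ω) := by
    have hyω : (fun i ↦ y i ω) = X *ᵥ β + fun i ↦ ε i ω := funext fun i ↦ hy i ω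
    rw [← quadForm_ols_sub_mul_rss_eq hS, ← hyω, hθHO, hσHO, hβ, sum_smul_eq_transpose_mulVec,
      sum_sq_sub_dotProduct_eq, mulVec_mulVec, ← mul_assoc]
    simp only [← hB, s]
    rfl
  have hE : ∫ ω, θHO ω ∂μ = β ⬝ᵥ A *ᵥ β + ∑ i, (B i - s * (1 - P i)) * σ i ^ 2 := by
    rw [integral_congr_ae (ae_of_all μ hθ),
      integral_add_dotProduct_add_quadForm_of_iIndepFun hindep hL2 hmean hvar]
    simp [hBdiag, hPdiag]
  have hPsum : ∑ i, P i = k := by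
    rw [← Fintype.card_fin k, ← trace_hatMatrix hS]
    exact Finset.sum_congr rfl fun i _ ↦ (hPdiag i).symm
  have hbias := (sub_eq_of_eq_add' hE).trans
    (sum_sub_mul_one_sub_mul_eq hkn B P (fun i ↦ σ i ^ 2) hPsum)
  refine ⟨hbias, fun hσ ↦ sub_eq_zero.mp ?_, fun hBP ↦ sub_eq_zero.mp ?_⟩ <;> rw [hbias]
  · simp only [sub_average_eq_zero_of_forall_eq hσ, mul_zero, Finset.sum_const_zero, add_zero]
  · rw [sum_mul_sub_average_eq_zero_of_forall_eq fun i j ↦ (hBP i j).1,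
      sum_mul_sub_average_eq_zero_of_forall_eq fun i j ↦ (hBP i j).2]
    simp

/-- the bias of the homoscedasticity-only estimator
`θ̂_HO = β̂'Aβ̂ − Σ_i B_ii σ̂²_HO` is
`σ_{nB,σ²} + S_B (n/(n−k)) σ_{P,σ²}`; in particular `θ̂_HO` is unbiased under
homoscedasticity or under balanced design. -/
theorem homoscedasticity_only_estimator_bias {Ω : Type*} [MeasurableSpace Ω]
    (μ : Measure Ω) [IsProbabilityMeasure μ]
    {n k : ℕ} (hkn : k < n)
    (x : Fin n → Fin k → ℝ) (β : Fin k → ℝ)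
    (ε : Fin n → Ω → ℝ) (σ : Fin n → ℝ)
    (hmeas : ∀ i, Measurable (ε i))
    (hindep : iIndepFun ε μ)
    (hL2 : ∀ i, MemLp (ε i) 2 μ)
    (hmean : ∀ i, ∫ ω, ε i ω ∂μ = 0)
    (hvar : ∀ i, ∫ ω, (ε i ω) ^ 2 ∂μ = (σ i) ^ 2)
    (y : Fin n → Ω → ℝ) (hy : ∀ i ω, y i ω = x i ⬝ᵥ β + ε i ω)
    (A Sxx : Matrix (Fin k) (Fin k) ℝ)
    (hA : A.IsSymm)
    (hSxx : Sxx = ∑ i, vecMulVec (x i) (x i))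
    (hS : IsUnit Sxx.det)
    (βhat : Ω → Fin k → ℝ)
    (hβ : ∀ ω, βhat ω = Sxx⁻¹.mulVec (∑ j, y j ω • x j))
    (σHOsq : Ω → ℝ)
    (hσHO : ∀ ω, σHOsq ω = (1 / ((n : ℝ) - k)) * ∑ i, (y i ω - x i ⬝ᵥ βhat ω) ^ 2)
    (θHO : Ω → ℝ)
    (hθHO : ∀ ω, θHO ω = βhat ω ⬝ᵥ A.mulVec (βhat ω)
      - (∑ i, x i ⬝ᵥ (Sxx⁻¹ * A * Sxx⁻¹).mulVec (x i)) * σHOsq ω)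
    (B P : Fin n → ℝ)
    (hB : ∀ i, B i = x i ⬝ᵥ (Sxx⁻¹ * A * Sxx⁻¹).mulVec (x i))
    (hP : ∀ i, P i = x i ⬝ᵥ Sxx⁻¹.mulVec (x i))
    (sbar : ℝ) (hsbar : sbar = (1 / (n : ℝ)) * ∑ i, (σ i) ^ 2) :
    (∫ ω, θHO ω ∂μ - β ⬝ᵥ A.mulVec β
      = (∑ i, B i * ((σ i) ^ 2 - sbar))
        + (∑ i, B i) * ((n : ℝ) / ((n : ℝ) - k))
            * ((1 / (n : ℝ)) * ∑ i, P i * ((σ i) ^ 2 - sbar))) ∧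
    ((∀ i j, (σ i) ^ 2 = (σ j) ^ 2) → ∫ ω, θHO ω ∂μ = β ⬝ᵥ A.mulVec β) ∧
    ((∀ i j, B i = B j ∧ P i = P j) → ∫ ω, θHO ω ∂μ = β ⬝ᵥ A.mulVec β) :=
  homoscedasticity_only_estimator_bias_general μ hkn x β ε σ hindep hL2 hmean hvar y hy A Sxx hSxx
    hS βhat hβ σHOsq hσHO θHO hθHO B P hB hP sbar hsbar
end
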